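/- Fix 0 < t ≤ T and q, h ∈ ℝ^d. Assume L : ℝ^d × ℝ^d → ℝ is convex (jointly in both variables) and Φ and Ψ are convex, and that the infima defining û(t, q+h) and û(t, q−h) are each attained by a C¹ path. Then û(t, q+h) + û(t, q−h) ≥ 2·û(t, q). -/

import Mathlib

/-!
The cost is convex on the convex set of `C¹` paths: `L` is jointly convex in `(r, ṙ)`, the
derivative of a convex combination of paths is the same combination of the derivatives, and
averaging the convex potentials `Φ`, `Ψ` against `Γ` preserves convexity. The midpoint of the
optimal paths ending at `q + h` and `q - h` ends at `q` and costs at most the average of the two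
optimal costs.

The infimum defining `û(t,q)` may be over a set unbounded below, where `sInf` takes the junk
value `0`. Averaging with a constant path shows that this then happens at every endpoint, so
all three values are `0`.
-/

open MeasureTheory Set
open scoped RealInnerProductSpace

/-- The individual cost `B₀^T(r)` of a path `r : [0,T] → ℝ^d`:
`∫₀^T [ L(r(s), ṙ(s)) + ∫_Ω Φ(r(s) − Γ(s,ω̃)) dω̃ ] ds + ∫_Ω Ψ(r(0) − Γ(0,ω̃)) dω̃`. -/
noncomputable def indivCost (d : ℕ) (T : ℝ)
    (L : EuclideanSpace ℝ (Fin d) → EuclideanSpace ℝ (Fin d) → ℝ)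
    (Φ Ψ : EuclideanSpace ℝ (Fin d) → ℝ)
    (Γ : ℝ → ℝ → EuclideanSpace ℝ (Fin d))
    (r : ℝ → EuclideanSpace ℝ (Fin d)) : ℝ :=
  (∫ s in Icc (0:ℝ) T,
      (L (r s) (derivWithin r (Icc (0:ℝ) T) s)
        + ∫ ω in Ioo (0:ℝ) 1, Φ (r s - Γ s ω)))
    + ∫ ω in Ioo (0:ℝ) 1, Ψ (r 0 - Γ 0 ω)

/-- The value function `û(t,q) := inf { B₀^t(r̄) : r̄ C¹ on [0,t], r̄(t) = q }`. -/
noncomputable def uhat (d : ℕ) (t : ℝ)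
    (L : EuclideanSpace ℝ (Fin d) → EuclideanSpace ℝ (Fin d) → ℝ)
    (Φ Ψ : EuclideanSpace ℝ (Fin d) → ℝ)
    (Γ : ℝ → ℝ → EuclideanSpace ℝ (Fin d))
    (q : EuclideanSpace ℝ (Fin d)) : ℝ :=
  sInf {c : ℝ | ∃ r : ℝ → EuclideanSpace ℝ (Fin d),
    ContDiffOn ℝ 1 r (Icc (0:ℝ) t) ∧ r t = q ∧ indivCost d t L Φ Ψ Γ r = c}

section Potential

variable {α E : Type*} [MeasurableSpace α] {μ : Measure α} [NormedAddCommGroup E] {Φ : E → ℝ}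

theorem convexOn_integral_comp_sub [NormedSpace ℝ E] (hΦc : ConvexOn ℝ univ Φ) {γ : α → E}
    (hint : ∀ x, Integrable (fun ω => Φ (x - γ ω)) μ) :
    ConvexOn ℝ univ fun x => ∫ ω, Φ (x - γ ω) ∂μ := by
  refine ⟨convex_univ, fun x _ y _ a b ha hb hab => ?_⟩
  have hcomb := ((hint x).const_mul a).add ((hint y).const_mul b)
  calc ∫ ω, Φ (a • x + b • y - γ ω) ∂μ
      ≤ ∫ ω, (a * Φ (x - γ ω) + b * Φ (y - γ ω)) ∂μ := by
        refine integral_mono (hint _) hcomb fun ω => ?_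
        have hsplit : a • x + b • y - γ ω = a • (x - γ ω) + b • (y - γ ω) := by
          linear_combination (norm := module) hab • γ ω
        simpa [hsplit] using hΦc.2 (mem_univ _) (mem_univ _) ha hb hab
    _ = a * (∫ ω, Φ (x - γ ω) ∂μ) + b * ∫ ω, Φ (y - γ ω) ∂μ := by
        rw [integral_add ((hint x).const_mul a) ((hint y).const_mul b),
          integral_const_mul, integral_const_mul]

variable [ProperSpace E]

theorem exists_bound_comp_sub (hΦ : Continuous Φ) (R C : ℝ) :
    ∃ M, ∀ x y : E, ‖x‖ ≤ R → ‖y‖ ≤ C → ‖Φ (x - y)‖ ≤ M := by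
  obtain ⟨M, hM⟩ := (isCompact_closedBall (0 : E) (R + C)).exists_bound_of_continuousOn
    hΦ.continuousOn
  refine ⟨M, fun x y hx hy => hM _ ?_⟩
  rw [mem_closedBall_zero_iff]
  exact (norm_sub_le x y).trans (add_le_add hx hy)

variable [MeasurableSpace E] [BorelSpace E]

theorem integrable_comp_sub [IsFiniteMeasure μ] (hΦ : Continuous Φ) {γ : α → E}
    (hγm : Measurable γ) {C : ℝ} (hγb : ∀ ω, ‖γ ω‖ ≤ C) (x : E) :
    Integrable (fun ω => Φ (x - γ ω)) μ := by
  obtain ⟨M, hM⟩ := exists_bound_comp_sub hΦ ‖x‖ C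
  exact (integrable_const M).mono'
    (hΦ.measurable.comp (measurable_const.sub hγm)).aestronglyMeasurable
    (.of_forall fun ω => hM _ _ le_rfl (hγb ω))

theorem continuousOn_integral_comp_sub {X : Type*} [TopologicalSpace X] [FirstCountableTopology X]
    [IsFiniteMeasure μ] (hΦ : Continuous Φ) {Γ : X → α → E} (hΓm : ∀ s, Measurable (Γ s))
    {C : ℝ} (hΓb : ∀ s ω, ‖Γ s ω‖ ≤ C) (hΓc : ∀ ω, Continuous fun s => Γ s ω)
    {K : Set X} (hK : IsCompact K) {c : X → E} (hc : ContinuousOn c K) :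
    ContinuousOn (fun s => ∫ ω, Φ (c s - Γ s ω) ∂μ) K := by
  obtain ⟨R, hR⟩ := hK.exists_bound_of_continuousOn hc
  obtain ⟨M, hM⟩ := exists_bound_comp_sub hΦ R C
  refine continuousOn_of_dominated (bound := fun _ => M)
    (fun s _ => (hΦ.measurable.comp (measurable_const.sub (hΓm s))).aestronglyMeasurable)
    (fun s hs => .of_forall fun ω => hM _ _ (hR s hs) (hΓb s ω)) (integrable_const M) ?_
  exact .of_forall fun ω => hΦ.comp_continuousOn (hc.sub (hΓc ω).continuousOn)

end Potential

theorem convex_setOf_contDiffOn {E : Type*} [NormedAddCommGroup E] [NormedSpace ℝ E]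
    (n : WithTop ℕ∞) (K : Set ℝ) : Convex ℝ {r : ℝ → E | ContDiffOn ℝ n r K} :=
  fun _ ha _ hb a b _ _ _ => (ha.const_smul a).add (hb.const_smul b)

section Cost

variable {d : ℕ} {t : ℝ} {L : EuclideanSpace ℝ (Fin d) → EuclideanSpace ℝ (Fin d) → ℝ}
  {Φ Ψ : EuclideanSpace ℝ (Fin d) → ℝ} {Γ : ℝ → ℝ → EuclideanSpace ℝ (Fin d)}

noncomputable def runningCost (t : ℝ)
    (L : EuclideanSpace ℝ (Fin d) → EuclideanSpace ℝ (Fin d) → ℝ)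
    (Φ : EuclideanSpace ℝ (Fin d) → ℝ) (Γ : ℝ → ℝ → EuclideanSpace ℝ (Fin d))
    (r : ℝ → EuclideanSpace ℝ (Fin d)) (s : ℝ) : ℝ :=
  L (r s) (derivWithin r (Icc 0 t) s) + ∫ ω in Ioo (0:ℝ) 1, Φ (r s - Γ s ω)

theorem indivCost_eq_integral_runningCost (r : ℝ → EuclideanSpace ℝ (Fin d)) :
    indivCost d t L Φ Ψ Γ r
      = (∫ s in Icc 0 t, runningCost t L Φ Γ r s) + ∫ ω in Ioo (0:ℝ) 1, Ψ (r 0 - Γ 0 ω) :=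
  rfl

theorem integrableOn_runningCost (ht : 0 < t)
    (hL : Continuous fun p : EuclideanSpace ℝ (Fin d) × EuclideanSpace ℝ (Fin d) => L p.1 p.2)
    (hΦ : Continuous Φ) (hΓm : ∀ s, Measurable (Γ s)) {C : ℝ} (hΓb : ∀ s ω, ‖Γ s ω‖ ≤ C)
    (hΓc : ∀ ω, Continuous fun s => Γ s ω) {r : ℝ → EuclideanSpace ℝ (Fin d)}
    (hr : ContDiffOn ℝ 1 r (Icc 0 t)) :
    IntegrableOn (runningCost t L Φ Γ r) (Icc 0 t) := by
  have hLag : ContinuousOn (fun s => L (r s) (derivWithin r (Icc 0 t) s)) (Icc 0 t) :=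
    hL.comp_continuousOn (f := fun s => (r s, derivWithin r (Icc 0 t) s))
      (hr.continuousOn.prodMk (hr.continuousOn_derivWithin (uniqueDiffOn_Icc ht) le_rfl))
  have hPot := continuousOn_integral_comp_sub (μ := volume.restrict (Ioo (0:ℝ) 1))
    hΦ hΓm hΓb hΓc isCompact_Icc hr.continuousOn
  exact (hLag.add hPot).integrableOn_compact isCompact_Icc

theorem runningCost_convexComb_le (ht : 0 < t)
    (hLc : ConvexOn ℝ univ
      fun p : EuclideanSpace ℝ (Fin d) × EuclideanSpace ℝ (Fin d) => L p.1 p.2)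
    (hPc : ∀ s, ConvexOn ℝ univ fun x => ∫ ω in Ioo (0:ℝ) 1, Φ (x - Γ s ω))
    {a b : ℝ → EuclideanSpace ℝ (Fin d)}
    (ha : ContDiffOn ℝ 1 a (Icc 0 t)) (hb : ContDiffOn ℝ 1 b (Icc 0 t))
    {θ₁ θ₂ : ℝ} (hθ₁ : 0 ≤ θ₁) (hθ₂ : 0 ≤ θ₂) (hθ : θ₁ + θ₂ = 1) {s : ℝ} (hs : s ∈ Icc 0 t) :
    runningCost t L Φ Γ (θ₁ • a + θ₂ • b) s
      ≤ θ₁ * runningCost t L Φ Γ a s + θ₂ * runningCost t L Φ Γ b s := by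
  have hderiv : derivWithin (θ₁ • a + θ₂ • b) (Icc 0 t) s
      = θ₁ • derivWithin a (Icc 0 t) s + θ₂ • derivWithin b (Icc 0 t) s :=
    ((((ha.differentiableOn one_ne_zero) s hs).hasDerivWithinAt.const_smul θ₁).add
      (((hb.differentiableOn one_ne_zero) s hs).hasDerivWithinAt.const_smul θ₂)).derivWithin
      (uniqueDiffOn_Icc ht s hs)
  have hLag := hLc.2 (mem_univ (a s, derivWithin a (Icc 0 t) s))
    (mem_univ (b s, derivWithin b (Icc 0 t) s)) hθ₁ hθ₂ hθ
  have hPot := (hPc s).2 (mem_univ (a s)) (mem_univ (b s)) hθ₁ hθ₂ hθ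
  simp only [Prod.smul_mk, Prod.mk_add_mk, smul_eq_mul] at hLag hPot
  simp only [runningCost, hderiv, Pi.add_apply, Pi.smul_apply]
  linarith

theorem convexOn_indivCost (ht : 0 < t)
    (hL : Continuous fun p : EuclideanSpace ℝ (Fin d) × EuclideanSpace ℝ (Fin d) => L p.1 p.2)
    (hΦ : Continuous Φ) (hΨ : Continuous Ψ) (hΓm : ∀ s, Measurable (Γ s)) {C : ℝ}
    (hΓb : ∀ s ω, ‖Γ s ω‖ ≤ C) (hΓc : ∀ ω, Continuous fun s => Γ s ω)
    (hLc : ConvexOn ℝ univ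
      fun p : EuclideanSpace ℝ (Fin d) × EuclideanSpace ℝ (Fin d) => L p.1 p.2)
    (hΦc : ConvexOn ℝ univ Φ) (hΨc : ConvexOn ℝ univ Ψ) :
    ConvexOn ℝ {r | ContDiffOn ℝ 1 r (Icc 0 t)} (indivCost d t L Φ Ψ Γ) := by
  have hPc (f : EuclideanSpace ℝ (Fin d) → ℝ) (hf : Continuous f) (hfc : ConvexOn ℝ univ f)
      (s : ℝ) : ConvexOn ℝ univ fun x => ∫ ω in Ioo (0:ℝ) 1, f (x - Γ s ω) :=
    convexOn_integral_comp_sub hfc (integrable_comp_sub hf (hΓm s) (hΓb s))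
  refine ⟨convex_setOf_contDiffOn 1 _, fun a ha b hb θ₁ θ₂ hθ₁ hθ₂ hθ => ?_⟩
  have hIa := integrableOn_runningCost ht hL hΦ hΓm hΓb hΓc ha
  have hIb := integrableOn_runningCost ht hL hΦ hΓm hΓb hΓc hb
  have hI := integrableOn_runningCost ht hL hΦ hΓm hΓb hΓc
    (convex_setOf_contDiffOn 1 _ ha hb hθ₁ hθ₂ hθ)
  have hRun : ∫ s in Icc 0 t, runningCost t L Φ Γ (θ₁ • a + θ₂ • b) s
      ≤ θ₁ * (∫ s in Icc 0 t, runningCost t L Φ Γ a s)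
        + θ₂ * ∫ s in Icc 0 t, runningCost t L Φ Γ b s := by
    calc ∫ s in Icc 0 t, runningCost t L Φ Γ (θ₁ • a + θ₂ • b) s
        ≤ ∫ s in Icc 0 t, (θ₁ * runningCost t L Φ Γ a s + θ₂ * runningCost t L Φ Γ b s) :=
          setIntegral_mono_on hI ((hIa.const_mul θ₁).add (hIb.const_mul θ₂)) measurableSet_Icc
            fun s hs => runningCost_convexComb_le ht hLc (hPc Φ hΦ hΦc) ha hb hθ₁ hθ₂ hθ hs
      _ = _ := by
          rw [integral_add (hIa.const_mul θ₁) (hIb.const_mul θ₂), integral_const_mul,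
            integral_const_mul]
  have hInit := (hPc Ψ hΨ hΨc 0).2 (mem_univ (a 0)) (mem_univ (b 0)) hθ₁ hθ₂ hθ
  simp only [smul_eq_mul] at hInit
  simp only [indivCost_eq_integral_runningCost, Pi.add_apply, Pi.smul_apply, smul_eq_mul]
  linarith

end Cost

section Value

variable {d : ℕ} {t : ℝ} {L : EuclideanSpace ℝ (Fin d) → EuclideanSpace ℝ (Fin d) → ℝ}
  {Φ Ψ : EuclideanSpace ℝ (Fin d) → ℝ} {Γ : ℝ → ℝ → EuclideanSpace ℝ (Fin d)}

def endpointCosts (d : ℕ) (t : ℝ)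
    (L : EuclideanSpace ℝ (Fin d) → EuclideanSpace ℝ (Fin d) → ℝ)
    (Φ Ψ : EuclideanSpace ℝ (Fin d) → ℝ) (Γ : ℝ → ℝ → EuclideanSpace ℝ (Fin d))
    (q : EuclideanSpace ℝ (Fin d)) : Set ℝ :=
  {c : ℝ | ∃ r : ℝ → EuclideanSpace ℝ (Fin d),
    ContDiffOn ℝ 1 r (Icc (0:ℝ) t) ∧ r t = q ∧ indivCost d t L Φ Ψ Γ r = c}

theorem uhat_eq_sInf_endpointCosts (q : EuclideanSpace ℝ (Fin d)) :
    uhat d t L Φ Ψ Γ q = sInf (endpointCosts d t L Φ Ψ Γ q) :=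
  rfl

theorem not_bddBelow_endpointCosts
    (hJ : ConvexOn ℝ {r | ContDiffOn ℝ 1 r (Icc 0 t)} (indivCost d t L Φ Ψ Γ))
    {q : EuclideanSpace ℝ (Fin d)} (hq : ¬BddBelow (endpointCosts d t L Φ Ψ Γ q))
    (w : EuclideanSpace ℝ (Fin d)) : ¬BddBelow (endpointCosts d t L Φ Ψ Γ w) := by
  rw [not_bddBelow_iff] at hq ⊢
  intro x
  -- average a cheap path ending at `q` with the constant path at the reflection of `q` in `w`
  set v := (2:ℝ) • w - q
  obtain ⟨_, ⟨ρ, hρ, hρt, rfl⟩, hρx⟩ := hq (2 * x - indivCost d t L Φ Ψ Γ fun _ => v)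
  have hv : ContDiffOn ℝ 1 (fun _ => v) (Icc 0 t) := contDiffOn_const
  have hmid := hJ.2 hρ hv one_half_pos.le one_half_pos.le (add_halves 1)
  refine ⟨_, ⟨_, hJ.1 hρ hv one_half_pos.le one_half_pos.le (add_halves 1), ?_, rfl⟩, ?_⟩
  · simp only [Pi.add_apply, Pi.smul_apply, hρt, v]
    module
  · simp only [smul_eq_mul] at hmid
    linarith

theorem uhat_convexComb_le
    (hJ : ConvexOn ℝ {r | ContDiffOn ℝ 1 r (Icc 0 t)} (indivCost d t L Φ Ψ Γ))
    {q₁ q₂ : EuclideanSpace ℝ (Fin d)} {θ₁ θ₂ : ℝ} (hθ₁ : 0 ≤ θ₁) (hθ₂ : 0 ≤ θ₂)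
    (hθ : θ₁ + θ₂ = 1)
    (h₁ : ∃ r : ℝ → EuclideanSpace ℝ (Fin d), ContDiffOn ℝ 1 r (Icc (0:ℝ) t) ∧ r t = q₁ ∧
      indivCost d t L Φ Ψ Γ r = uhat d t L Φ Ψ Γ q₁)
    (h₂ : ∃ r : ℝ → EuclideanSpace ℝ (Fin d), ContDiffOn ℝ 1 r (Icc (0:ℝ) t) ∧ r t = q₂ ∧
      indivCost d t L Φ Ψ Γ r = uhat d t L Φ Ψ Γ q₂) :
    uhat d t L Φ Ψ Γ (θ₁ • q₁ + θ₂ • q₂)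
      ≤ θ₁ * uhat d t L Φ Ψ Γ q₁ + θ₂ * uhat d t L Φ Ψ Γ q₂ := by
  obtain ⟨r₁, hr₁, hr₁t, hcost₁⟩ := h₁
  obtain ⟨r₂, hr₂, hr₂t, hcost₂⟩ := h₂
  by_cases hB : BddBelow (endpointCosts d t L Φ Ψ Γ (θ₁ • q₁ + θ₂ • q₂))
  · calc uhat d t L Φ Ψ Γ (θ₁ • q₁ + θ₂ • q₂)
        ≤ indivCost d t L Φ Ψ Γ (θ₁ • r₁ + θ₂ • r₂) :=
          (uhat_eq_sInf_endpointCosts _).trans_le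
            (csInf_le hB ⟨_, hJ.1 hr₁ hr₂ hθ₁ hθ₂ hθ, by simp [hr₁t, hr₂t], rfl⟩)
      _ ≤ θ₁ • indivCost d t L Φ Ψ Γ r₁ + θ₂ • indivCost d t L Φ Ψ Γ r₂ :=
          hJ.2 hr₁ hr₂ hθ₁ hθ₂ hθ
      _ = θ₁ * uhat d t L Φ Ψ Γ q₁ + θ₂ * uhat d t L Φ Ψ Γ q₂ := by
          rw [hcost₁, hcost₂, smul_eq_mul, smul_eq_mul]
  · have hzero (w : EuclideanSpace ℝ (Fin d)) : uhat d t L Φ Ψ Γ w = 0 :=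
      (uhat_eq_sInf_endpointCosts w).trans
        (Real.sInf_of_not_bddBelow (not_bddBelow_endpointCosts hJ hB w))
    simp [hzero]

end Value

theorem uhat_second_difference_lower_bound_general
    (d : ℕ)
    (L : EuclideanSpace ℝ (Fin d) → EuclideanSpace ℝ (Fin d) → ℝ)
    (Φ Ψ : EuclideanSpace ℝ (Fin d) → ℝ)
    (Γ : ℝ → ℝ → EuclideanSpace ℝ (Fin d))
    (t : ℝ) (ht : 0 < t)
    -- `L`, `Φ`, `Ψ` continuous
    (hL : Continuous (fun p : EuclideanSpace ℝ (Fin d) × EuclideanSpace ℝ (Fin d) => L p.1 p.2))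
    (hΦ : Continuous Φ) (hΨ : Continuous Ψ)
    -- `Γ` is jointly measurable, bounded, continuous in time
    (hΓm : Measurable (fun p : ℝ × ℝ => Γ p.1 p.2))
    (hΓb : ∃ C, ∀ s ω, ‖Γ s ω‖ ≤ C)
    (hΓc : ∀ ω, Continuous (fun s => Γ s ω))
    (q h : EuclideanSpace ℝ (Fin d))
    -- `L` jointly convex, `Φ` and `Ψ` convex
    (hLconv : ConvexOn ℝ univ
      (fun p : EuclideanSpace ℝ (Fin d) × EuclideanSpace ℝ (Fin d) => L p.1 p.2))
    (hΦconv : ConvexOn ℝ univ Φ) (hΨconv : ConvexOn ℝ univ Ψ)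
    -- the infima defining `û(t,q+h)` and `û(t,q−h)` are attained by `C¹` paths
    (hattainPlus : ∃ r : ℝ → EuclideanSpace ℝ (Fin d),
      ContDiffOn ℝ 1 r (Icc (0:ℝ) t) ∧ r t = q + h ∧
        indivCost d t L Φ Ψ Γ r = uhat d t L Φ Ψ Γ (q + h))
    (hattainMinus : ∃ r : ℝ → EuclideanSpace ℝ (Fin d),
      ContDiffOn ℝ 1 r (Icc (0:ℝ) t) ∧ r t = q - h ∧
        indivCost d t L Φ Ψ Γ r = uhat d t L Φ Ψ Γ (q - h)) :
    2 * uhat d t L Φ Ψ Γ q ≤ uhat d t L Φ Ψ Γ (q + h) + uhat d t L Φ Ψ Γ (q - h) := by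
  obtain ⟨C, hC⟩ := hΓb
  have hJ := convexOn_indivCost (Γ := Γ) ht hL hΦ hΨ (fun s => hΓm.comp measurable_prodMk_left)
    hC hΓc hLconv hΦconv hΨconv
  have hmid := uhat_convexComb_le hJ one_half_pos.le one_half_pos.le (add_halves 1)
    hattainPlus hattainMinus
  rw [show (1 / 2 : ℝ) • (q + h) + (1 / 2 : ℝ) • (q - h) = q by module] at hmid
  linarith

/-- Midpoint concavity bound from below: if `L` is jointly convex and `Φ`, `Ψ` are convex,
and the infima defining `û(t,q+h)` and `û(t,q−h)` are attained, then
`û(t,q+h) + û(t,q−h) ≥ 2û(t,q)`. -/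
theorem uhat_second_difference_lower_bound
    (d : ℕ) (hd : 1 ≤ d)
    (L : EuclideanSpace ℝ (Fin d) → EuclideanSpace ℝ (Fin d) → ℝ)
    (Φ Ψ : EuclideanSpace ℝ (Fin d) → ℝ)
    (Γ : ℝ → ℝ → EuclideanSpace ℝ (Fin d))
    (T t : ℝ) (ht : 0 < t) (htT : t ≤ T)
    -- `L`, `Φ`, `Ψ` continuous; `Φ`, `Ψ` even and bounded below
    (hL : Continuous (fun p : EuclideanSpace ℝ (Fin d) × EuclideanSpace ℝ (Fin d) => L p.1 p.2))
    (hΦ : Continuous Φ) (hΨ : Continuous Ψ)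
    (hΦe : ∀ x, Φ (-x) = Φ x) (hΨe : ∀ x, Ψ (-x) = Ψ x)
    (hΦb : BddBelow (range Φ)) (hΨb : BddBelow (range Ψ))
    -- `Γ` is jointly measurable, bounded, continuous in time
    (hΓm : Measurable (fun p : ℝ × ℝ => Γ p.1 p.2))
    (hΓb : ∃ C, ∀ s ω, ‖Γ s ω‖ ≤ C)
    (hΓc : ∀ ω, Continuous (fun s => Γ s ω))
    (q h : EuclideanSpace ℝ (Fin d))
    -- `L` jointly convex, `Φ` and `Ψ` convex
    (hLconv : ConvexOn ℝ univ
      (fun p : EuclideanSpace ℝ (Fin d) × EuclideanSpace ℝ (Fin d) => L p.1 p.2))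
    (hΦconv : ConvexOn ℝ univ Φ) (hΨconv : ConvexOn ℝ univ Ψ)
    -- the infima defining `û(t,q+h)` and `û(t,q−h)` are attained by `C¹` paths
    (hattainPlus : ∃ r : ℝ → EuclideanSpace ℝ (Fin d),
      ContDiffOn ℝ 1 r (Icc (0:ℝ) t) ∧ r t = q + h ∧
        indivCost d t L Φ Ψ Γ r = uhat d t L Φ Ψ Γ (q + h))
    (hattainMinus : ∃ r : ℝ → EuclideanSpace ℝ (Fin d),
      ContDiffOn ℝ 1 r (Icc (0:ℝ) t) ∧ r t = q - h ∧
        indivCost d t L Φ Ψ Γ r = uhat d t L Φ Ψ Γ (q - h)) :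
    2 * uhat d t L Φ Ψ Γ q ≤ uhat d t L Φ Ψ Γ (q + h) + uhat d t L Φ Ψ Γ (q - h) :=
  uhat_second_difference_lower_bound_general d L Φ Ψ Γ t ht hL hΦ hΨ hΓm hΓb hΓc q h hLconv hΦconv
    hΨconv hattainPlus hattainMinus
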